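/- arXiv:2203.10883 — 2 statements merged into one kernel-verified Lean document; each statement's English description precedes it below -/
import Mathlib

section
/- Let ν_1, ν_2 have exponential tails: G_1(x) = C_1·exp(-λ_1 x) and G_2(x) = C_2·exp(-λ_2 x) for x large enough, with 0 < λ_1 < λ_2. Set δ = λ_2/λ_1 - 1 and x_n = (1/λ_1)(log n + log C_1 - log(δ log n)). Then exp(-n·G_1(x_n)) = n^{-δ} and n·G_2(x_n) = O((log n)^{δ+1}/n^δ), so both P(X_{1,n}^+ ≤ x_n) and P(X_{2,n}^+ ≥ x_n) are O((log n)^{δ+1}/n^δ). -/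
open MeasureTheory Real Set Filter Asymptotics Topology

/-! At `xₙ` the tail of `ν₁` is exactly `δ log n / n`, so `exp (-n G₁ xₙ) = n ^ (-δ)`; the tail
of `ν₂` is, up to a constant, the `λ₂ / λ₁ = δ + 1`-th power of it, so
`n G₂ xₙ ≍ (log n) ^ (δ + 1) / n ^ δ`. For the maxima, `P(X₁ₙ⁺ ≤ x) = (1 - G₁ x) ^ n ≤ exp (-n G₁ x)`,
and the union bound gives `P(X₂ₙ⁺ ≥ x) ≤ n P(X ≥ x)`, where `P(X ≥ xₙ) ≤ G₂ xₙ` because `G₂` is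
left-continuous at `xₙ`. -/

lemma Asymptotics.isBigO_of_eventually_nonneg_of_le {α : Type*} {l : Filter α} {f g : α → ℝ}
    (hf : 0 ≤ᶠ[l] f) (hfg : f ≤ᶠ[l] g) : f =O[l] g :=
  IsBigO.of_bound' <| by
    filter_upwards [hf, hfg] with x h₀ h₁
    rwa [Real.norm_of_nonneg h₀, Real.norm_of_nonneg (h₀.trans h₁)]

lemma Real.tendsto_sub_log_atTop : Tendsto (fun x : ℝ => x - log x) atTop atTop := by
  refine tendsto_atTop_mono' atTop ?_ (tendsto_id.atTop_div_const (by norm_num : (0 : ℝ) < 2))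
  filter_upwards [isLittleO_log_id_atTop.bound (by norm_num : (0 : ℝ) < 1 / 2),
    eventually_ge_atTop 0] with x hlog hx
  simp only [id, Real.norm_eq_abs, abs_of_nonneg hx] at hlog ⊢
  linarith [le_abs_self (log x)]

lemma isBigO_rpow_neg_log_rpow_div_rpow {δ : ℝ} (hδ : 0 ≤ δ + 1) :
    (fun n : ℕ => (n : ℝ) ^ (-δ)) =O[atTop] fun n => log n ^ (δ + 1) / (n : ℝ) ^ δ := by
  refine isBigO_of_eventually_nonneg_of_le (.of_forall fun _ => by positivity) ?_
  filter_upwards [(tendsto_log_atTop.comp tendsto_natCast_atTop_atTop).eventually_ge_atTop 1]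
    with n hlog
  rw [rpow_neg n.cast_nonneg, inv_eq_one_div]
  gcongr
  exact one_le_rpow hlog hδ

section MaximumOfSample

variable {α : Type*} [LinearOrder α] [TopologicalSpace α] [MeasurableSpace α] (μ : Measure α)

lemma measureReal_Ici_le_of_continuousWithinAt [IsFiniteMeasure μ] {x : α} [(𝓝[<] x).NeBot]
    {f : α → ℝ} (hf : ContinuousWithinAt f (Iio x) x)
    (h : ∀ᶠ y in 𝓝[<] x, μ.real (Ioi y) = f y) : μ.real (Ici x) ≤ f x :=
  ge_of_tendsto (hf.tendsto.congr' (h.mono fun _ hy => hy.symm)) <|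
    eventually_nhdsWithin_of_forall fun _ hy => measureReal_mono fun _ hz => lt_of_lt_of_le hy hz

variable [OrderClosedTopology α] [OpensMeasurableSpace α] [IsProbabilityMeasure μ]

lemma measureReal_Iic_pow_le_exp (x : α) (n : ℕ) :
    μ.real (Iic x) ^ n ≤ exp (-n * μ.real (Ioi x)) := by
  rw [← compl_Ioi, probReal_compl_eq_one_sub measurableSet_Ioi, neg_mul, ← mul_neg,
    Real.exp_nat_mul]
  exact pow_le_pow_left₀ (sub_nonneg.2 measureReal_le_one) (one_sub_le_exp_neg _) n

lemma one_sub_measureReal_Iio_pow_le (x : α) (n : ℕ) :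
    1 - μ.real (Iio x) ^ n ≤ n * μ.real (Ici x) := by
  have h := one_add_mul_le_pow (a := -μ.real (Ici x))
    (by linarith [measureReal_le_one (μ := μ) (s := Ici x)]) n
  rw [← sub_eq_add_neg, ← probReal_compl_eq_one_sub measurableSet_Ici, compl_Ici] at h
  linarith

lemma isBigO_measureReal_Iic_pow (l : Filter ℕ) (x : ℕ → α) :
    (fun n => μ.real (Iic (x n)) ^ n) =O[l] fun n => exp (-n * μ.real (Ioi (x n))) :=
  isBigO_of_eventually_nonneg_of_le (.of_forall fun _ => by positivity)
    (.of_forall fun n => measureReal_Iic_pow_le_exp μ (x n) n)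

lemma isBigO_one_sub_measureReal_Iio_pow (l : Filter ℕ) (x : ℕ → α) :
    (fun n => 1 - μ.real (Iio (x n)) ^ n) =O[l] fun n => n * μ.real (Ici (x n)) :=
  isBigO_of_eventually_nonneg_of_le
    (.of_forall fun _ => sub_nonneg.2 (pow_le_one₀ measureReal_nonneg measureReal_le_one))
    (.of_forall fun n => one_sub_measureReal_Iio_pow_le μ (x n) n)

end MaximumOfSample

/-- The level `xₙ` at which `n` times the tail `C₁ exp (-l₁ x)` equals `δ log n`. -/
noncomputable def expTailThreshold (l₁ C₁ δ t : ℝ) : ℝ :=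
  (1 / l₁) * (log t + log C₁ - log (δ * log t))

section ExpTailThreshold

variable {l₁ C₁ δ t : ℝ}

lemma tendsto_expTailThreshold_atTop (hl₁ : 0 < l₁) (hδ : 0 < δ) :
    Tendsto (expTailThreshold l₁ C₁ δ) atTop atTop := by
  have h : Tendsto (fun t => (log t - log (log t)) + (log C₁ - log δ)) atTop atTop :=
    (tendsto_sub_log_atTop.comp tendsto_log_atTop).atTop_add tendsto_const_nhds
  refine (h.const_mul_atTop (one_div_pos.2 hl₁)).congr' ?_
  filter_upwards [eventually_gt_atTop 1] with t ht
  rw [expTailThreshold, log_mul hδ.ne' (log_pos ht).ne']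
  ring

lemma exp_neg_mul_expTailThreshold (hl₁ : l₁ ≠ 0) (hC₁ : 0 < C₁) (hδ : 0 < δ) (ht : 1 < t) :
    exp (-l₁ * expTailThreshold l₁ C₁ δ t) = δ * log t / (t * C₁) := by
  have hx : -l₁ * expTailThreshold l₁ C₁ δ t = log (δ * log t) - (log t + log C₁) := by
    rw [expTailThreshold]; field_simp; ring
  rw [hx, exp_sub, exp_add, exp_log (mul_pos hδ (log_pos ht)), exp_log (by linarith),
    exp_log hC₁]

lemma exp_neg_mul_mul_exp_neg_mul_expTailThreshold (hl₁ : l₁ ≠ 0) (hC₁ : 0 < C₁)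
    (hδ : 0 < δ) (ht : 1 < t) :
    exp (-t * (C₁ * exp (-l₁ * expTailThreshold l₁ C₁ δ t))) = t ^ (-δ) := by
  rw [exp_neg_mul_expTailThreshold hl₁ hC₁ hδ ht, rpow_def_of_pos (by linarith)]
  field_simp

lemma mul_mul_exp_neg_mul_expTailThreshold (hl₁ : l₁ ≠ 0) (hC₁ : 0 < C₁) (hδ : 0 < δ)
    (ht : 1 < t) (C₂ : ℝ) :
    t * (C₂ * exp (-(l₁ * (δ + 1)) * expTailThreshold l₁ C₁ δ t))
      = C₂ * (δ / C₁) ^ (δ + 1) * (log t ^ (δ + 1) / t ^ δ) := by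
  have ht₀ : 0 < t := by linarith
  rw [show -(l₁ * (δ + 1)) * expTailThreshold l₁ C₁ δ t
        = -l₁ * expTailThreshold l₁ C₁ δ t * (δ + 1) by ring, exp_mul,
    exp_neg_mul_expTailThreshold hl₁ hC₁ hδ ht,
    show δ * log t / (t * C₁) = δ / C₁ * (log t / t) by ring,
    mul_rpow (by positivity) (div_nonneg (log_pos ht).le ht₀.le),
    div_rpow (log_pos ht).le ht₀.le, rpow_add_one ht₀.ne']
  field_simp

end ExpTailThreshold

theorem stmt_1_general
    (μ₁ μ₂ : Measure ℝ) [IsProbabilityMeasure μ₁] [IsProbabilityMeasure μ₂]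
    (G₁ G₂ : ℝ → ℝ)
    (hG₁ : ∀ x, G₁ x = (μ₁ (Set.Ioi x)).toReal)
    (hG₂ : ∀ x, G₂ x = (μ₂ (Set.Ioi x)).toReal)
    (C₁ C₂ l₁ l₂ : ℝ) (hC₁ : 0 < C₁)
    (hl₁ : 0 < l₁) (hl : l₁ < l₂)
    (htail : ∃ x₀ : ℝ, ∀ x ≥ x₀,
      G₁ x = C₁ * Real.exp (-l₁ * x) ∧ G₂ x = C₂ * Real.exp (-l₂ * x))
    (δ : ℝ) (hδ : δ = l₂ / l₁ - 1)
    (xn : ℕ → ℝ)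
    (hxn : ∀ n : ℕ, xn n = (1 / l₁) * (Real.log n + Real.log C₁ - Real.log (δ * Real.log n))) :
    (∀ᶠ n : ℕ in atTop, Real.exp (-(n : ℝ) * G₁ (xn n)) = (n : ℝ) ^ (-δ)) ∧
    (fun n : ℕ => (n : ℝ) * G₂ (xn n))
      =O[atTop] (fun n : ℕ => (Real.log n) ^ (δ + 1) / (n : ℝ) ^ δ) ∧
    (fun n : ℕ => ((μ₁ (Set.Iic (xn n))).toReal) ^ n)
      =O[atTop] (fun n : ℕ => (Real.log n) ^ (δ + 1) / (n : ℝ) ^ δ) ∧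
    (fun n : ℕ => 1 - ((μ₂ (Set.Iio (xn n))).toReal) ^ n)
      =O[atTop] (fun n : ℕ => (Real.log n) ^ (δ + 1) / (n : ℝ) ^ δ) := by
  obtain ⟨x₀, hx₀⟩ := htail
  have hδ₀ : 0 < δ := by rw [hδ, sub_pos, one_lt_div hl₁]; exact hl
  have hl₂ : l₂ = l₁ * (δ + 1) := by rw [hδ]; field_simp; ring
  have hxn' : ∀ n : ℕ, xn n = expTailThreshold l₁ C₁ δ n := hxn
  have hev : ∀ᶠ n : ℕ in atTop, 1 < (n : ℝ) ∧ x₀ < xn n := by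
    simp only [hxn']
    exact (tendsto_natCast_atTop_atTop.eventually_gt_atTop 1).and
      (((tendsto_expTailThreshold_atTop hl₁ hδ₀).comp tendsto_natCast_atTop_atTop)
        |>.eventually_gt_atTop x₀)
  have hexp : ∀ᶠ n : ℕ in atTop, exp (-n * G₁ (xn n)) = (n : ℝ) ^ (-δ) := by
    filter_upwards [hev] with n ⟨hn, hx⟩
    rw [(hx₀ _ hx.le).1, hxn' n,
      exp_neg_mul_mul_exp_neg_mul_expTailThreshold hl₁.ne' hC₁ hδ₀ hn]
  have hG₂O :
      (fun n : ℕ => n * G₂ (xn n)) =O[atTop] fun n => log n ^ (δ + 1) / (n : ℝ) ^ δ := by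
    refine (isBigO_const_mul_self (C₂ * (δ / C₁) ^ (δ + 1)) _ _).congr' ?_ EventuallyEq.rfl
    filter_upwards [hev] with n ⟨hn, hx⟩
    rw [(hx₀ _ hx.le).2, hxn' n, hl₂, mul_mul_exp_neg_mul_expTailThreshold hl₁.ne' hC₁ hδ₀ hn]
  have hIci : ∀ᶠ n : ℕ in atTop, n * μ₂.real (Ici (xn n)) ≤ n * G₂ (xn n) := by
    filter_upwards [hev] with n ⟨_, hx⟩
    rw [(hx₀ _ hx.le).2]
    refine mul_le_mul_of_nonneg_left ?_ n.cast_nonneg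
    refine measureReal_Ici_le_of_continuousWithinAt μ₂ (f := fun y => C₂ * exp (-l₂ * y))
      (by fun_prop) ?_
    filter_upwards [Ioo_mem_nhdsLT hx] with y hy
    exact (hG₂ y).symm.trans (hx₀ y hy.1.le).2
  refine ⟨hexp, hG₂O, ?_, ?_⟩
  · refine ((isBigO_measureReal_Iic_pow μ₁ atTop xn).congr' EventuallyEq.rfl ?_).trans
      (isBigO_rpow_neg_log_rpow_div_rpow (by linarith))
    filter_upwards [hexp] with n h
    rwa [hG₁] at h
  · exact (isBigO_one_sub_measureReal_Iio_pow μ₂ atTop xn).trans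
      ((isBigO_of_eventually_nonneg_of_le (.of_forall fun _ => by positivity) hIci).trans hG₂O)

/-- exponential tails.  If `G₁ x = C₁ exp (-λ₁ x)` and `G₂ x = C₂ exp (-λ₂ x)`
for `x` large enough, `0 < λ₁ < λ₂`, `δ = λ₂/λ₁ - 1` and
`xₙ = (1/λ₁)(log n + log C₁ - log (δ log n))`, then eventually
`exp (-n G₁ (xₙ)) = n ^ (-δ)`, `n * G₂ (xₙ) = O ((log n)^(δ+1) / n^δ)`, and both
`P(X₁ₙ⁺ ≤ xₙ)` and `P(X₂ₙ⁺ ≥ xₙ)` are `O ((log n)^(δ+1) / n^δ)`. -/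
theorem stmt_1
    (μ₁ μ₂ : Measure ℝ) [IsProbabilityMeasure μ₁] [IsProbabilityMeasure μ₂]
    (G₁ G₂ : ℝ → ℝ)
    (hG₁ : ∀ x, G₁ x = (μ₁ (Set.Ioi x)).toReal)
    (hG₂ : ∀ x, G₂ x = (μ₂ (Set.Ioi x)).toReal)
    (C₁ C₂ l₁ l₂ : ℝ) (hC₁ : 0 < C₁) (hC₂ : 0 < C₂)
    (hl₁ : 0 < l₁) (hl : l₁ < l₂)
    (htail : ∃ x₀ : ℝ, ∀ x ≥ x₀,
      G₁ x = C₁ * Real.exp (-l₁ * x) ∧ G₂ x = C₂ * Real.exp (-l₂ * x))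
    (δ : ℝ) (hδ : δ = l₂ / l₁ - 1)
    (xn : ℕ → ℝ)
    (hxn : ∀ n : ℕ, xn n = (1 / l₁) * (Real.log n + Real.log C₁ - Real.log (δ * Real.log n))) :
    (∀ᶠ n : ℕ in atTop, Real.exp (-(n : ℝ) * G₁ (xn n)) = (n : ℝ) ^ (-δ)) ∧
    (fun n : ℕ => (n : ℝ) * G₂ (xn n))
      =O[atTop] (fun n : ℕ => (Real.log n) ^ (δ + 1) / (n : ℝ) ^ δ) ∧
    (fun n : ℕ => ((μ₁ (Set.Iic (xn n))).toReal) ^ n)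
      =O[atTop] (fun n : ℕ => (Real.log n) ^ (δ + 1) / (n : ℝ) ^ δ) ∧
    (fun n : ℕ => 1 - ((μ₂ (Set.Iio (xn n))).toReal) ^ n)
      =O[atTop] (fun n : ℕ => (Real.log n) ^ (δ + 1) / (n : ℝ) ^ δ) :=
  stmt_1_general μ₁ μ₂ G₁ G₂ hG₁ hG₂ C₁ C₂ l₁ l₂ hC₁ hl₁ hl htail δ hδ xn hxn
end

section
/- Let ν have a polynomial tail with parameter λ > 1: G(x) ~ C·x^{-λ}. Then E[X_T^+] ~ T^{1/λ}·C^{1/λ}·Γ(1 − 1/λ) as T → ∞. -/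
open MeasureTheory ProbabilityTheory Real Set Filter


lemma aux_int {f : ℝ → ℝ} (hf : AEStronglyMeasurable f (volume.restrict (Ioi (0:ℝ))))
    {a c K l : ℝ} (ha : 0 < a) (hl : 1 < l)
    (h1 : ∀ x ∈ Ioc (0:ℝ) a, |f x| ≤ c) (h2 : ∀ x ∈ Ioi a, |f x| ≤ K * x ^ (-l)) :
    IntegrableOn f (Ioi (0:ℝ)) := by
  have hsub : Ioi (0:ℝ) ⊆ Ioc 0 a ∪ Ioi a := by
    intro x hx
    rcases le_or_gt x a with h | h
    · exact Or.inl ⟨hx, h⟩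
    · exact Or.inr h
  have hmeas1 : AEStronglyMeasurable f (volume.restrict (Ioc (0:ℝ) a)) :=
    hf.mono_set Ioc_subset_Ioi_self
  have hmeas2 : AEStronglyMeasurable f (volume.restrict (Ioi a)) :=
    hf.mono_set (Ioi_subset_Ioi ha.le)
  have i1 : IntegrableOn f (Ioc (0:ℝ) a) := by
    refine ⟨hmeas1, HasFiniteIntegral.restrict_of_bounded (C := c) measure_Ioc_lt_top ?_⟩
    refine (ae_restrict_iff' measurableSet_Ioc).2 (Eventually.of_forall (fun x hx => ?_))
    simpa using h1 x hx
  have i2 : IntegrableOn f (Ioi a) := by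
    have hK : IntegrableOn (fun x : ℝ => K * x ^ (-l)) (Ioi a) :=
      (integrableOn_Ioi_rpow_of_lt (by linarith) ha).const_mul K
    refine Integrable.mono' hK hmeas2 ?_
    refine (ae_restrict_iff' measurableSet_Ioi).2 (Eventually.of_forall (fun x hx => ?_))
    simpa using h2 x hx
  exact (i1.union i2).mono_set hsub

lemma texp_le_one {t : ℝ} (ht : 0 ≤ t) : t * exp (-t) ≤ 1 := by
  rw [exp_neg, mul_inv_le_iff₀ (exp_pos t), one_mul]
  linarith [add_one_le_exp t]

lemma one_sub_exp_neg_le {t : ℝ} : 1 - exp (-t) ≤ t := by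
  linarith [add_one_le_exp (-t)]

lemma aux_gamma {C l : ℝ} (hC : 0 < C) (hl : 1 < l) :
    ∫ x in Ioi (0:ℝ), (1 - exp (-(C * x ^ (-l)))) = C ^ (1/l) * Gamma (1 - 1/l) := by
  have hl0 : (0:ℝ) < l := by linarith
  set u : ℝ → ℝ := fun x => 1 - exp (-(C * x ^ (-l))) with hu_def
  set u' : ℝ → ℝ := fun x => -(C * l * x ^ (-l - 1) * exp (-(C * x ^ (-l)))) with hu'_def
  have hupos : ∀ x : ℝ, 0 < x → 0 ≤ u x ∧ u x ≤ C * x ^ (-l) := by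
    intro x hx
    have h1 : 0 < C * x ^ (-l) := by positivity
    constructor
    · simp only [hu_def, sub_nonneg]
      exact exp_le_one_iff.2 (by linarith)
    · simpa only [hu_def] using one_sub_exp_neg_le (t := C * x ^ (-l))
  have hu'x : ∀ x : ℝ, 0 < x → u' x * x = -(C * l * (x ^ (-l) * exp (-(C * x ^ (-l))))) := by
    intro x hx
    have : x ^ (-l - 1) * x = x ^ (-l) := by
      rw [← rpow_add_one hx.ne' (-l - 1)]; norm_num
    simp only [hu'_def]; rw [neg_mul]
    congr 1
    calc C * l * x ^ (-l - 1) * exp (-(C * x ^ (-l))) * x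
        = C * l * (x ^ (-l - 1) * x * exp (-(C * x ^ (-l)))) := by ring
      _ = _ := by rw [this]
  have humeas : Measurable u := by fun_prop
  have hu'meas : Measurable (fun x => u' x * x) := by fun_prop
  -- integrability of u on Ioi 0
  have hint_u : IntegrableOn u (Ioi (0:ℝ)) := by
    refine aux_int humeas.aestronglyMeasurable.restrict one_pos hl (c := 1) (K := C) ?_ ?_
    · intro x hx
      rcases hupos x hx.1 with ⟨h0, h1⟩
      rw [abs_of_nonneg h0]
      simp only [hu_def]
      have : 0 ≤ exp (-(C * x ^ (-l))) := (exp_pos _).le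
      linarith
    · intro x hx
      have hx0 : (0:ℝ) < x := lt_trans one_pos hx
      rcases hupos x hx0 with ⟨h0, h1⟩
      rwa [abs_of_nonneg h0]
  have hint_u'v : IntegrableOn (fun x => u' x * x) (Ioi (0:ℝ)) := by
    refine aux_int hu'meas.aestronglyMeasurable.restrict one_pos hl (c := l) (K := C * l) ?_ ?_
    · intro x hx
      have hx0 : (0:ℝ) < x := hx.1
      rw [hu'x x hx0, abs_neg, abs_of_nonneg (by positivity)]
      have h2 := texp_le_one (t := C * x ^ (-l)) (by positivity)
      calc C * l * (x ^ (-l) * exp (-(C * x ^ (-l))))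
          = l * (C * x ^ (-l) * exp (-(C * x ^ (-l)))) := by ring
        _ ≤ l * 1 := mul_le_mul_of_nonneg_left h2 hl0.le
        _ = l := mul_one l
    · intro x hx
      have hx0 : (0:ℝ) < x := lt_trans one_pos hx
      rw [hu'x x hx0, abs_neg, abs_of_nonneg (by positivity)]
      have hexp : exp (-(C * x ^ (-l))) ≤ 1 :=
        exp_le_one_iff.2 (neg_nonpos.2 (by positivity))
      calc C * l * (x ^ (-l) * exp (-(C * x ^ (-l))))
          ≤ C * l * (x ^ (-l) * 1) := by
            refine mul_le_mul_of_nonneg_left ?_ (by positivity)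
            exact mul_le_mul_of_nonneg_left hexp (by positivity)
        _ = C * l * x ^ (-l) := by ring
  -- derivatives
  have hu : ∀ x ∈ Ioi (0:ℝ), HasDerivAt u (u' x) x := by
    intro x hx
    have h1 : HasDerivAt (fun y : ℝ => y ^ (-l)) (-l * x ^ (-l - 1)) x :=
      hasDerivAt_rpow_const (Or.inl (ne_of_gt hx))
    have h2 := ((h1.const_mul C).neg.exp).const_sub 1
    refine h2.congr_deriv ?_
    simp only [hu'_def, Pi.neg_apply]
    ring
  have hv : ∀ x ∈ Ioi (0:ℝ), HasDerivAt (fun y : ℝ => y) (1:ℝ) x := fun x _ => hasDerivAt_id x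
  -- boundary limits
  have h_zero : Tendsto (fun x => u x * x) (nhdsWithin 0 (Ioi 0)) (nhds 0) := by
    refine squeeze_zero' (g := fun x : ℝ => x) ?_ ?_ ?_
    · refine eventually_nhdsWithin_of_forall (fun x hx => ?_)
      exact mul_nonneg (hupos x hx).1 (le_of_lt hx)
    · refine eventually_nhdsWithin_of_forall (fun x hx => ?_)
      calc u x * x ≤ 1 * x := by
            refine mul_le_mul_of_nonneg_right ?_ (le_of_lt hx)
            have h2 := (hupos x hx).1
            have h3 : 0 ≤ exp (-(C * x ^ (-l))) := (exp_pos _).le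
            simp only [hu_def]; linarith
        _ = x := one_mul x
    · exact (continuous_id.tendsto' 0 0 rfl).mono_left nhdsWithin_le_nhds
  have h_infty : Tendsto (fun x => u x * x) atTop (nhds 0) := by
    refine squeeze_zero' (g := fun x => C * x ^ (1 - l)) ?_ ?_ ?_
    · exact (eventually_gt_atTop 0).mono (fun x hx => mul_nonneg (hupos x hx).1 hx.le)
    · refine (eventually_gt_atTop 0).mono (fun x hx => ?_)
      have h1 : x ^ (-l) * x = x ^ (1 - l) := by
        rw [← rpow_add_one hx.ne' (-l)]; norm_num [sub_eq_add_neg, add_comm]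
      calc u x * x ≤ (C * x ^ (-l)) * x := mul_le_mul_of_nonneg_right (hupos x hx).2 hx.le
        _ = C * x ^ (1 - l) := by rw [mul_assoc, h1]
    · have h4 := (tendsto_rpow_neg_atTop (y := l - 1) (by linarith : (0:ℝ) < l - 1)).const_mul C
      simp only [mul_zero] at h4
      convert h4 using 2 with x
      norm_num
  have key := integral_Ioi_mul_deriv_eq_deriv_mul hu hv
      (by simpa only [Pi.mul_def, mul_one] using hint_u)
      (by simpa only [Pi.mul_def] using hint_u'v) h_zero h_infty
  simp only [mul_one] at key
  -- evaluate ∫ u' x * x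
  set J : ℝ := ∫ x in Ioi (0:ℝ), x ^ (-l) * exp (-(C * x ^ (-l))) with hJ_def
  have hsub : ∫ x in Ioi (0:ℝ), u' x * x = -(C * l * J) := by
    have e1 : ∫ x in Ioi (0:ℝ), u' x * x
        = ∫ x in Ioi (0:ℝ), -(C * l * (x ^ (-l) * exp (-(C * x ^ (-l))))) := by
      refine setIntegral_congr_fun measurableSet_Ioi (fun x hx => ?_)
      exact hu'x x hx
    rw [e1, integral_neg, integral_const_mul, hJ_def]
  -- evaluate J by substitution x = y^{-1}
  have hJ : J = C ^ (-(l - 1) / l) * (1 / l) * Gamma ((l - 1) / l) := by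
    have hsub2 := integral_comp_rpow_Ioi
      (g := fun y : ℝ => y ^ (-l) * exp (-(C * y ^ (-l)))) (p := (-1:ℝ)) (by norm_num)
    have e2 : ∫ x in Ioi (0:ℝ), (|(-1:ℝ)| * x ^ ((-1:ℝ) - 1)) •
        ((x ^ ((-1):ℝ)) ^ (-l) * exp (-(C * (x ^ ((-1):ℝ)) ^ (-l))))
        = ∫ x in Ioi (0:ℝ), x ^ (l - 2) * exp (-C * x ^ l) := by
      refine setIntegral_congr_fun measurableSet_Ioi (fun x hx => ?_)
      have hx0 : (0:ℝ) < x := hx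
      have hp : (x ^ ((-1):ℝ)) ^ (-l) = x ^ l := by
        rw [← rpow_mul hx0.le]; norm_num
      rw [hp]
      have habs : |(-1:ℝ)| = 1 := by norm_num
      rw [habs, one_mul, smul_eq_mul]
      have hm : x ^ ((-1:ℝ) - 1) * x ^ l = x ^ (l - 2) := by
        rw [← rpow_add hx0]; norm_num [sub_eq_add_neg, add_comm]
      calc x ^ ((-1:ℝ) - 1) * (x ^ l * exp (-(C * x ^ l)))
          = (x ^ ((-1:ℝ) - 1) * x ^ l) * exp (-(C * x ^ l)) := by ring
        _ = x ^ (l - 2) * exp (-C * x ^ l) := by rw [hm, neg_mul]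
    rw [e2] at hsub2
    rw [hJ_def, ← hsub2,
      integral_rpow_mul_exp_neg_mul_rpow hl0 (by linarith : (-1:ℝ) < l - 2) hC]
    have h9 : l - 2 + 1 = l - 1 := by ring
    rw [h9]
  rw [key, hsub, hJ]
  have hll : l ≠ 0 := hl0.ne'
  have e3 : -(l - 1) / l = 1 / l - 1 := by field_simp; ring
  have e4 : (l - 1) / l = 1 - 1 / l := by field_simp
  rw [e3, e4]
  have e5 : C * l * (C ^ ((1:ℝ) / l - 1) * (1 / l) * Gamma (1 - 1 / l))
      = (C * C ^ ((1:ℝ) / l - 1)) * (l * (1 / l)) * Gamma (1 - 1 / l) := by ring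
  have e6 : C * C ^ ((1:ℝ) / l - 1) = C ^ ((1:ℝ) / l) := by
    nth_rw 1 [← rpow_one C]
    rw [← rpow_add hC]
    norm_num
  have e7 : l * (1 / l) = 1 := by field_simp
  linear_combination Gamma (1 - 1/l) * (l * (1/l)) * e6 + Gamma (1 - 1/l) * C ^ ((1:ℝ)/l) * e7

lemma aux_main {F : ℝ → ℝ} (hFmeas : Measurable F)
    (hF0 : ∀ t, 0 ≤ F t) (hF1 : ∀ t, F t ≤ 1)
    {C l : ℝ} (hC : 0 < C) (hl : 1 < l)
    (htail : Tendsto (fun x => (1 - F x) / (C * x ^ (-l))) atTop (nhds 1)) :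
    Tendsto (fun T : ℕ => ∫ u in Ioi (0:ℝ), (1 - F ((T:ℝ) ^ (1/l) * u) ^ T))
      atTop (nhds (C ^ (1/l) * Gamma (1 - 1/l))) := by
  have hl0 : (0:ℝ) < l := by linarith
  have hinvl : (0:ℝ) < 1/l := by positivity
  -- tail bounds
  have hev : ∀ᶠ x in atTop, (1 - F x) / (C * x ^ (-l)) ∈ Icc (1/2 : ℝ) 2 :=
    htail.eventually (Icc_mem_nhds (by norm_num) (by norm_num))
  obtain ⟨x0, hx0⟩ := eventually_atTop.1 hev
  set x1 : ℝ := max x0 1 with hx1_def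
  have hx1_one : (1:ℝ) ≤ x1 := le_max_right _ _
  have hx1_pos : (0:ℝ) < x1 := lt_of_lt_of_le one_pos hx1_one
  have htail_ub : ∀ x : ℝ, x1 ≤ x → 1 - F x ≤ 2 * (C * x ^ (-l)) := by
    intro x hx
    have hxpos : (0:ℝ) < x := lt_of_lt_of_le hx1_pos hx
    have hD : (0:ℝ) < C * x ^ (-l) := by positivity
    have := (hx0 x (le_trans (le_max_left _ _) hx)).2
    calc 1 - F x = (1 - F x) / (C * x ^ (-l)) * (C * x ^ (-l)) := by field_simp
      _ ≤ 2 * (C * x ^ (-l)) := mul_le_mul_of_nonneg_right this hD.le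
  have htail_lb : ∀ x : ℝ, x1 ≤ x → (1/2) * (C * x ^ (-l)) ≤ 1 - F x := by
    intro x hx
    have hxpos : (0:ℝ) < x := lt_of_lt_of_le hx1_pos hx
    have hD : (0:ℝ) < C * x ^ (-l) := by positivity
    have := (hx0 x (le_trans (le_max_left _ _) hx)).1
    calc (1/2) * (C * x ^ (-l)) ≤ (1 - F x) / (C * x ^ (-l)) * (C * x ^ (-l)) :=
          mul_le_mul_of_nonneg_right this hD.le
      _ = 1 - F x := by field_simp
  -- the scaling constant
  set c : ℕ → ℝ := fun T => (T:ℝ) ^ ((1:ℝ)/l) with hc_def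
  have hc_one : ∀ T : ℕ, 1 ≤ T → (1:ℝ) ≤ c T := by
    intro T hT
    exact one_le_rpow (by exact_mod_cast hT) hinvl.le
  have hc_neg_l : ∀ T : ℕ, 1 ≤ T → (c T) ^ (-l) = ((T:ℝ))⁻¹ := by
    intro T hT
    have hT0 : (0:ℝ) ≤ (T:ℝ) := Nat.cast_nonneg T
    rw [hc_def, ← rpow_mul hT0]
    have : (1:ℝ)/l * (-l) = -1 := by field_simp
    rw [this, rpow_neg_one]
  -- pointwise bounds on the integrand
  have hFpow01 : ∀ (T : ℕ) (y : ℝ), 0 ≤ 1 - F y ^ T ∧ 1 - F y ^ T ≤ 1 := by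
    intro T y
    have h1 : (0:ℝ) ≤ F y ^ T := pow_nonneg (hF0 y) T
    have h2 : F y ^ T ≤ 1 := pow_le_one₀ (hF0 y) (hF1 y)
    constructor <;> linarith
  have hbern : ∀ (T : ℕ) (y : ℝ), 1 - F y ^ T ≤ (T:ℝ) * (1 - F y) := by
    intro T y
    have h := one_add_mul_le_pow (a := F y - 1) (by linarith [hF0 y]) T
    have h2 : 1 + (T:ℝ) * (F y - 1) ≤ F y ^ T := by
      simpa [add_sub_cancel] using h
    nlinarith
  -- the dominating function
  set bound : ℝ → ℝ := fun u => if u ≤ x1 then 1 else 2 * C * u ^ (-l) with hbound_def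
  have hbound_int : IntegrableOn bound (Ioi (0:ℝ)) := by
    have hbmeas : Measurable bound := by
      refine Measurable.ite (measurableSet_Iic (a := x1)) measurable_const (by fun_prop)
    refine aux_int hbmeas.aestronglyMeasurable.restrict hx1_pos hl (c := 1) (K := 2*C) ?_ ?_
    · intro x hx
      rw [hbound_def]
      simp only [if_pos hx.2]
      norm_num
    · intro x hx
      have hx1lt : x1 < x := hx
      have hxpos : (0:ℝ) < x := lt_trans hx1_pos hx1lt
      rw [hbound_def]
      simp only [if_neg (not_le.2 hx1lt)]
      rw [abs_of_nonneg (by positivity)]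
  -- domination
  have h_bound : ∀ᶠ T : ℕ in atTop, ∀ᵐ u ∂(volume.restrict (Ioi (0:ℝ))),
      ‖1 - F (c T * u) ^ T‖ ≤ bound u := by
    filter_upwards [eventually_ge_atTop 1] with T hT
    refine (ae_restrict_iff' measurableSet_Ioi).2 (Eventually.of_forall (fun u hu => ?_))
    have hu0 : (0:ℝ) < u := hu
    obtain ⟨hb0, hb1⟩ := hFpow01 T (c T * u)
    rw [Real.norm_eq_abs, abs_of_nonneg hb0, hbound_def]
    by_cases hcase : u ≤ x1
    · simp only [if_pos hcase]; exact hb1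
    · simp only [if_neg hcase]
      push_neg at hcase
      have hcu : x1 ≤ c T * u := by
        calc x1 ≤ u := hcase.le
          _ = 1 * u := (one_mul u).symm
          _ ≤ c T * u := mul_le_mul_of_nonneg_right (hc_one T hT) hu0.le
      have hcu0 : (0:ℝ) < c T * u := lt_of_lt_of_le hx1_pos hcu
      have step1 : 1 - F (c T * u) ^ T ≤ (T:ℝ) * (1 - F (c T * u)) := hbern T _
      have step2 : (1:ℝ) - F (c T * u) ≤ 2 * (C * (c T * u) ^ (-l)) := htail_ub _ hcu
      have hmul : (c T * u) ^ (-l) = ((T:ℝ))⁻¹ * u ^ (-l) := by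
        rw [mul_rpow (by positivity) hu0.le, hc_neg_l T hT]
      have hT0 : (0:ℝ) < (T:ℝ) := by exact_mod_cast hT
      calc 1 - F (c T * u) ^ T ≤ (T:ℝ) * (1 - F (c T * u)) := step1
        _ ≤ (T:ℝ) * (2 * (C * (c T * u) ^ (-l))) :=
            mul_le_mul_of_nonneg_left step2 hT0.le
        _ = ((T:ℝ) * (T:ℝ)⁻¹) * (2 * C * u ^ (-l)) := by rw [hmul]; ring
        _ = 2 * C * u ^ (-l) := by rw [mul_inv_cancel₀ hT0.ne', one_mul]
  -- measurability
  have h_meas : ∀ᶠ T : ℕ in atTop, AEStronglyMeasurable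
      (fun u : ℝ => 1 - F (c T * u) ^ T) (volume.restrict (Ioi (0:ℝ))) := by
    refine Eventually.of_forall (fun T => ?_)
    have : Measurable (fun u : ℝ => 1 - F (c T * u) ^ T) :=
      ((hFmeas.comp (measurable_const_mul (c T))).pow_const T).const_sub 1
    exact this.aestronglyMeasurable.restrict
  -- pointwise limit
  have h_lim : ∀ᵐ u ∂(volume.restrict (Ioi (0:ℝ))),
      Tendsto (fun T : ℕ => 1 - F (c T * u) ^ T) atTop
        (nhds (1 - exp (-(C * u ^ (-l))))) := by
    refine (ae_restrict_iff' measurableSet_Ioi).2 (Eventually.of_forall (fun u hu => ?_))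
    have hu0 : (0:ℝ) < u := hu
    have hcu : Tendsto (fun T : ℕ => c T * u) atTop atTop :=
      ((tendsto_rpow_atTop hinvl).comp tendsto_natCast_atTop_atTop).atTop_mul_const hu0
    set g : ℕ → ℝ := fun T => 1 - F (c T * u) with hg_def
    have hFg : ∀ T, F (c T * u) = 1 - g T := by intro T; rw [hg_def]; ring
    have hul : (0:ℝ) < u ^ (-l) := rpow_pos_of_pos hu0 _
    have hratio : Tendsto (fun T : ℕ => g T / (C * (c T * u) ^ (-l))) atTop (nhds 1) :=
      htail.comp hcu
    have hTg : Tendsto (fun T : ℕ => (T:ℝ) * g T) atTop (nhds (C * u ^ (-l))) := by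
      have heq : ∀ᶠ T : ℕ in atTop,
          g T / (C * (c T * u) ^ (-l)) * (C * u ^ (-l)) = (T:ℝ) * g T := by
        filter_upwards [eventually_ge_atTop 1] with T hT
        have hT0 : (0:ℝ) < (T:ℝ) := by exact_mod_cast hT
        have hmul : (c T * u) ^ (-l) = ((T:ℝ))⁻¹ * u ^ (-l) := by
          rw [mul_rpow (by positivity) hu0.le, hc_neg_l T hT]
        rw [hmul]
        field_simp
      have := hratio.mul_const (C * u ^ (-l))
      rw [one_mul] at this
      exact Tendsto.congr' heq this
    have hg0 : Tendsto g atTop (nhds 0) := by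
      have h2 : Tendsto (fun T : ℕ => ((T:ℝ) * g T) * ((T:ℝ))⁻¹) atTop (nhds 0) := by
        have h3 : Tendsto (fun T : ℕ => ((T:ℝ))⁻¹) atTop (nhds 0) :=
          tendsto_inv_atTop_zero.comp tendsto_natCast_atTop_atTop
        simpa using hTg.mul h3
      refine Tendsto.congr' ?_ h2
      filter_upwards [eventually_ge_atTop 1] with T hT
      have hT0 : ((T:ℝ)) ≠ 0 := by positivity
      field_simp
    have hgpos : ∀ᶠ T : ℕ in atTop, 0 < g T := by
      filter_upwards [hcu.eventually_ge_atTop x1] with T hT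
      have h4 := htail_lb _ hT
      have h5 : (0:ℝ) < c T * u := lt_of_lt_of_le hx1_pos hT
      have : (0:ℝ) < 1/2 * (C * (c T * u) ^ (-l)) := by positivity
      rw [hg_def]; dsimp only; linarith
    have hglt : ∀ᶠ T : ℕ in atTop, g T < 1 :=
      hg0.eventually_lt_const one_pos
    -- slope of log(1-t) at 0
    have hlog : HasDerivAt (fun t : ℝ => log (1 - t)) (-1) 0 := by
      have h6 := ((hasDerivAt_id (0:ℝ)).const_sub 1).log (by norm_num)
      simpa using h6
    have hsl := hasDerivAt_iff_tendsto_slope.1 hlog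
    have hgot : Tendsto g atTop (nhdsWithin 0 {(0:ℝ)}ᶜ) := by
      refine tendsto_nhdsWithin_iff.2 ⟨hg0, ?_⟩
      filter_upwards [hgpos] with T hT
      exact ne_of_gt hT
    have hcomp : Tendsto (fun T : ℕ => log (1 - g T) / g T) atTop (nhds (-1)) := by
      have h7 := hsl.comp hgot
      refine Tendsto.congr ?_ h7
      intro T
      simp [Function.comp, slope_def_field, slope, vsub_eq_sub, inv_mul_eq_div]
    have hTlog : Tendsto (fun T : ℕ => (T:ℝ) * log (1 - g T)) atTop
        (nhds (-(C * u ^ (-l)))) := by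
      have h8 := hTg.mul hcomp
      have h9 : C * u ^ (-l) * (-1) = -(C * u ^ (-l)) := by ring
      rw [h9] at h8
      refine Tendsto.congr' ?_ h8
      filter_upwards [hgpos] with T hT
      rw [mul_div_assoc', mul_comm ((T:ℝ) * g T), mul_div_assoc, mul_div_assoc,
        div_self hT.ne', mul_one, mul_comm]
    have hexp : Tendsto (fun T : ℕ => exp ((T:ℝ) * log (1 - g T))) atTop
        (nhds (exp (-(C * u ^ (-l))))) :=
      (Real.continuous_exp.tendsto _).comp hTlog
    have heq2 : ∀ᶠ T : ℕ in atTop, exp ((T:ℝ) * log (1 - g T)) = F (c T * u) ^ T := by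
      filter_upwards [hglt] with T hT
      have hpos : 0 < 1 - g T := by linarith
      rw [exp_nat_mul, exp_log hpos, hFg T]
    have hfin : Tendsto (fun T : ℕ => F (c T * u) ^ T) atTop
        (nhds (exp (-(C * u ^ (-l))))) := Tendsto.congr' heq2 hexp
    exact (tendsto_const_nhds.sub hfin)
  -- dominated convergence
  have hdct := tendsto_integral_filter_of_dominated_convergence (μ := volume.restrict (Ioi (0:ℝ)))
    (l := (atTop : Filter ℕ)) bound h_meas h_bound hbound_int h_lim
  rw [aux_gamma hC hl] at hdct
  exact hdct

/-- if `ν` has a polynomial tail `G(x) ~ C x^{-λ}` with `λ > 1`, then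
`E[X_T^+] ~ T^{1/λ} C^{1/λ} Γ(1 - 1/λ)` as `T → ∞`. -/
theorem stmt_11
    {Ω : Type*} [MeasurableSpace Ω] (P : Measure Ω) [IsProbabilityMeasure P]
    (ν : Measure ℝ) [IsProbabilityMeasure ν]
    (G : ℝ → ℝ) (hG : ∀ x, G x = (ν (Set.Ioi x)).toReal)
    (C l : ℝ) (hC : 0 < C) (hl : 1 < l)
    (htail : Tendsto (fun x => G x / (C * x ^ (-l))) atTop (nhds 1))
    (X : ℕ → Ω → ℝ)
    (hmeas : ∀ t, Measurable (X t))
    (hindep : iIndepFun X P)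
    (hid : ∀ t, Measure.map (X t) P = ν)
    (hInt : ∀ T : ℕ, Integrable (fun ω => ⨆ t : Fin T, X t ω) P) :
    Tendsto (fun T : ℕ =>
        (∫ ω, (⨆ t : Fin T, X t ω) ∂P) /
          ((T : ℝ) ^ (1 / l) * C ^ (1 / l) * Real.Gamma (1 - 1 / l)))
      atTop (nhds 1) := by
  have hl0 : (0:ℝ) < l := by linarith
  have hinvl : (0:ℝ) < 1/l := by positivity
  set M : ℕ → Ω → ℝ := fun T ω => ⨆ t : Fin T, X t ω with hM_def
  have hmeasM : ∀ T, Measurable (M T) := fun T => Measurable.iSup (fun i => hmeas i)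
  -- the CDF
  set F : ℝ → ℝ := fun t => (ν (Iic t)).toReal with hF_def
  have hF0 : ∀ t, 0 ≤ F t := fun t => ENNReal.toReal_nonneg
  have hF1 : ∀ t, F t ≤ 1 := by
    intro t
    rw [hF_def]
    calc (ν (Iic t)).toReal ≤ (ν univ).toReal :=
        ENNReal.toReal_le_toReal (measure_ne_top ν _) (measure_ne_top ν _)
          |>.2 (measure_mono (subset_univ _))
      _ = 1 := by simp
  have hFG : ∀ x, 1 - F x = G x := by
    intro x
    have h1 : ν (Iic x) = 1 - ν (Ioi x) := by
      rw [← Set.compl_Ioi, prob_compl_eq_one_sub measurableSet_Ioi]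
    rw [hG]
    show 1 - (ν (Iic x)).toReal = (ν (Ioi x)).toReal
    rw [h1, ENNReal.toReal_sub_of_le prob_le_one ENNReal.one_ne_top]
    simp
  have hFmono : Monotone F := by
    intro a b hab
    exact (ENNReal.toReal_le_toReal (measure_ne_top ν _) (measure_ne_top ν _)).2
      (measure_mono (Iic_subset_Iic.2 hab))
  have hFmeas : Measurable F := hFmono.measurable
  have htail' : Tendsto (fun x => (1 - F x) / (C * x ^ (-l))) atTop (nhds 1) := by
    refine Tendsto.congr (fun x => ?_) htail
    rw [hFG]
  -- CDF of the running maximum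
  have hPtail : ∀ (T : ℕ), 0 < T → ∀ t : ℝ,
      (P {ω | t < M T ω}).toReal = 1 - F t ^ T := by
    intro T hT t
    haveI : Nonempty (Fin T) := Fin.pos_iff_nonempty.1 hT
    have hset : {ω | M T ω ≤ t} = ⋂ i ∈ Finset.range T, X i ⁻¹' (Iic t) := by
      ext ω
      simp only [hM_def, mem_setOf_eq, mem_iInter, mem_preimage, mem_Iic, Finset.mem_range]
      constructor
      · intro h i hi
        refine le_trans ?_ h
        exact le_ciSup (f := fun t : Fin T => X t ω) (Set.Finite.bddAbove (Set.finite_range _)) (⟨i, hi⟩ : Fin T)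
      · intro h
        exact ciSup_le (fun i => h i i.isLt)
    have hPcdf : P {ω | M T ω ≤ t} = (ν (Iic t)) ^ T := by
      rw [hset, hindep.meas_biInter (fun i _ => ⟨Iic t, measurableSet_Iic, rfl⟩)]
      have : ∀ i ∈ Finset.range T, P (X i ⁻¹' (Iic t)) = ν (Iic t) := by
        intro i _
        rw [← hid i, Measure.map_apply (hmeas i) measurableSet_Iic]
      rw [Finset.prod_congr rfl this, Finset.prod_const, Finset.card_range]
    have hcompl : {ω | t < M T ω} = {ω | M T ω ≤ t}ᶜ := by
      ext ω; simp [not_le]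
    have hms : MeasurableSet {ω | M T ω ≤ t} := (hmeasM T) measurableSet_Iic
    rw [hcompl, prob_compl_eq_one_sub hms, hPcdf,
      ENNReal.toReal_sub_of_le (pow_le_one' prob_le_one T) ENNReal.one_ne_top,
      ENNReal.toReal_pow]
    simp [hF_def]
  -- layer cake
  have hlayer : ∀ (T : ℕ), 0 < T →
      ∫ ω, M T ω ∂P = (∫ t in Ioi (0:ℝ), (1 - F t ^ T))
        - ∫ ω, max (-(M T ω)) 0 ∂P := by
    intro T hT
    have hsplit := integral_eq_integral_pos_part_sub_integral_neg_part (hInt T)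
    simp only [Real.coe_toNNReal'] at hsplit
    have hpos := (hInt T).pos_part
    have hlc := hpos.integral_eq_integral_meas_lt
      (Eventually.of_forall (fun ω => le_max_right _ _))
    have hcongr : ∫ t in Ioi (0:ℝ), (P {a | t < max (M T a) 0}).toReal
        = ∫ t in Ioi (0:ℝ), (1 - F t ^ T) := by
      refine setIntegral_congr_fun measurableSet_Ioi (fun t ht => ?_)
      have hset2 : {a | t < max (M T a) 0} = {a | t < M T a} := by
        ext a
        simp only [mem_setOf_eq, lt_max_iff]
        constructor
        · rintro (h | h)
          · exact h
          · exact absurd h (not_lt.2 (le_of_lt ht))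
        · exact Or.inl
      rw [hset2, hPtail T hT t]
    rw [hsplit, hlc, ← hcongr]
    rfl
  -- substitution
  have hA : ∀ (T : ℕ), 0 < T →
      ∫ t in Ioi (0:ℝ), (1 - F t ^ T)
        = (T:ℝ) ^ ((1:ℝ)/l) * ∫ u in Ioi (0:ℝ), (1 - F ((T:ℝ) ^ ((1:ℝ)/l) * u) ^ T) := by
    intro T hT
    have hT0 : (0:ℝ) < (T:ℝ) := by exact_mod_cast hT
    have hb : (0:ℝ) < (T:ℝ) ^ ((1:ℝ)/l) := rpow_pos_of_pos hT0 _
    have h := integral_comp_mul_left_Ioi (g := fun t => 1 - F t ^ T) 0 hb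
    rw [mul_zero, smul_eq_mul] at h
    rw [h, ← mul_assoc, mul_inv_cancel₀ hb.ne', one_mul]
  -- integrability of X 0 and the constant bound on the negative part
  have hX0int : Integrable (X 0) P := by
    have h := hInt 1
    have he : (fun ω => ⨆ t : Fin 1, X t ω) = fun ω => X 0 ω := by
      funext ω
      rw [ciSup_unique]
      rfl
    rwa [he] at h
  set K : ℝ := ∫ ω, max (-(X 0 ω)) 0 ∂P with hK_def
  have hBle : ∀ (T : ℕ), 0 < T → ∫ ω, max (-(M T ω)) 0 ∂P ≤ K := by
    intro T hT
    haveI : Nonempty (Fin T) := Fin.pos_iff_nonempty.1 hT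
    refine integral_mono ((hInt T).neg.pos_part) (hX0int.neg.pos_part) (fun ω => ?_)
    have h1 : X 0 ω ≤ M T ω :=
      le_ciSup (f := fun t : Fin T => X t ω) (Set.Finite.bddAbove (Set.finite_range _))
        (⟨0, hT⟩ : Fin T)
    exact max_le_max (neg_le_neg h1) le_rfl
  have hB0 : ∀ (T : ℕ), 0 ≤ ∫ ω, max (-(M T ω)) 0 ∂P := by
    intro T
    exact integral_nonneg (fun ω => le_max_right _ _)
  -- positivity of constants
  have hgam : (0:ℝ) < Gamma (1 - 1/l) := by
    refine Gamma_pos_of_pos ?_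
    have : 1/l < 1 := by
      rw [div_lt_one hl0]; exact hl
    linarith
  have hCgam : (0:ℝ) < C ^ ((1:ℝ)/l) * Gamma (1 - 1/l) :=
    mul_pos (rpow_pos_of_pos hC _) hgam
  -- the denominator tends to infinity
  have hden : Tendsto (fun T : ℕ => (T:ℝ) ^ ((1:ℝ)/l) * C ^ ((1:ℝ)/l) * Gamma (1 - 1/l))
      atTop atTop := by
    have h := ((tendsto_rpow_atTop hinvl).comp
      tendsto_natCast_atTop_atTop).atTop_mul_const hCgam
    refine h.congr (fun T => ?_)
    simp only [Function.comp]
    ring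
  -- main convergence of positive part
  have hmain := aux_main hFmeas hF0 hF1 hC hl htail'
  have hterm1 : Tendsto (fun T : ℕ =>
      (∫ u in Ioi (0:ℝ), (1 - F ((T:ℝ) ^ ((1:ℝ)/l) * u) ^ T)) / (C ^ ((1:ℝ)/l) * Gamma (1 - 1/l)))
      atTop (nhds 1) := by
    have h := hmain.div_const (C ^ ((1:ℝ)/l) * Gamma (1 - 1/l))
    rwa [div_self hCgam.ne'] at h
  have hterm2 : Tendsto (fun T : ℕ =>
      (∫ ω, max (-(M T ω)) 0 ∂P) /
        ((T:ℝ) ^ ((1:ℝ)/l) * C ^ ((1:ℝ)/l) * Gamma (1 - 1/l))) atTop (nhds 0) := by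
    refine squeeze_zero' ?_ ?_ (tendsto_const_nhds.div_atTop hden (f := fun _ => K))
    · filter_upwards [hden.eventually_gt_atTop 0] with T hd
      exact div_nonneg (hB0 T) hd.le
    · filter_upwards [hden.eventually_gt_atTop 0, eventually_gt_atTop 0] with T hd hT
      exact div_le_div_of_nonneg_right (hBle T hT) hd.le
  -- assemble
  have hfinal := hterm1.sub hterm2
  rw [sub_zero] at hfinal
  refine Tendsto.congr' ?_ hfinal
  filter_upwards [eventually_gt_atTop 0] with T hT
  have hT0 : (0:ℝ) < (T:ℝ) := by exact_mod_cast hT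
  have hb : (0:ℝ) < (T:ℝ) ^ ((1:ℝ)/l) := rpow_pos_of_pos hT0 _
  show _ = (∫ ω, M T ω ∂P) / ((T:ℝ) ^ ((1:ℝ)/l) * C ^ ((1:ℝ)/l) * Gamma (1 - 1/l))
  rw [hlayer T hT, hA T hT, sub_div, mul_assoc ((T:ℝ) ^ ((1:ℝ)/l)),
    mul_div_mul_left _ _ hb.ne']
end
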